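/- arXiv:2603.18709 — 2 statements merged into one kernel-verified Lean document; each statement's English description precedes it below -/
import Mathlib

section
/- If a finite relational structure (database) D satisfies a tuple-generating dependency T, then the core of D also satisfies T. -/
/-!
A homomorphism `r : D → C` restricts to an endomorphism of the core `C`, so it is injective, hence
a permutation, on the finite active domain of `C`. A suitable power `r^[n]` with `n > 0` is therefore
still a homomorphism `D → C` but fixes every element of `C`. Composing the witness for `t` in `D`
with `r^[n]` gives a witness in `C` that agrees with the body match on the frontier.
-/

/-- A relational instance over schema `σ` with domain `α`: a set of facts. -/
abbrev Inst (σ α : Type) := Set (σ × List α)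

/-- `h` is a homomorphism from instance `D` to instance `E`. -/
def IsHom {σ α β : Type} (D : Inst σ α) (E : Inst σ β) (h : α → β) : Prop :=
  ∀ R as, (R, as) ∈ D → (R, as.map h) ∈ E

/-- The active domain of an instance. -/
def activeDom {σ α : Type} (D : Inst σ α) : Set α :=
  {a | ∃ R as, (R, as) ∈ D ∧ a ∈ as}

/-- Variables occurring in a set of atoms (atoms use natural numbers as variables). -/
def varsOf {σ : Type} (S : Set (σ × List ℕ)) : Set ℕ :=
  {x | ∃ R as, (R, as) ∈ S ∧ x ∈ as}

/-- A tuple-generating dependency: body and head are sets of relational atoms. -/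
structure TGD (σ : Type) where
  body : Set (σ × List ℕ)
  head : Set (σ × List ℕ)

/-- Frontier variables: variables shared by body and head. -/
def TGD.frontier {σ : Type} (t : TGD σ) : Set ℕ := varsOf t.body ∩ varsOf t.head

/-- `D` satisfies the TGD `t`. -/
def Satisfies {σ α : Type} (D : Inst σ α) (t : TGD σ) : Prop :=
  ∀ h : ℕ → α, IsHom t.body D h →
    ∃ g : ℕ → α, (∀ x ∈ t.frontier, g x = h x) ∧ IsHom t.head D g

/-- A conjunctive query: a set of atoms and a list of answer variables. -/
structure CQ (σ : Type) where
  atoms : Set (σ × List ℕ)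
  ansVars : List ℕ

/-- The set of answers to a CQ on an instance. -/
def CQ.Ans {σ α : Type} (q : CQ σ) (D : Inst σ α) : Set (List α) :=
  {c | ∃ h : ℕ → α, IsHom q.atoms D h ∧ q.ansVars.map h = c}

namespace IsHom

variable {σ α β γ : Type} {D D' : Inst σ α} {E E' : Inst σ β} {F : Inst σ γ}

theorem comp {f : α → β} {g : β → γ} (hf : IsHom D E f) (hg : IsHom E F g) :
    IsHom D F (g ∘ f) := fun R as h => by
  simpa only [List.map_map] using hg R _ (hf R as h)

theorem mono_right {f : α → β} (hf : IsHom D E f) (hE : E ⊆ E') : IsHom D E' f :=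
  fun R as h => hE (hf R as h)

theorem mono_left {f : α → β} (hf : IsHom D E f) (hD : D' ⊆ D) : IsHom D' E f :=
  fun R as h => hf R as (hD h)

theorem id : IsHom D D id := fun R as h => by simpa only [List.map_id] using h

theorem iterate {f : α → α} (hf : IsHom D D f) : ∀ n : ℕ, IsHom D D f^[n]
  | 0 => IsHom.id
  | n + 1 => by
    rw [Function.iterate_succ]
    exact hf.comp (hf.iterate n)

theorem mapsTo_activeDom {f : α → β} (hf : IsHom D E f) :
    Set.MapsTo f (activeDom D) (activeDom E) := by
  rintro a ⟨R, as, hmem, ha⟩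
  exact ⟨R, as.map f, hf R as hmem, List.mem_map_of_mem ha⟩

end IsHom

theorem Set.Finite.activeDom {σ α : Type} {D : Inst σ α} (hD : D.Finite) :
    (activeDom D).Finite := by
  refine (hD.biUnion fun p _ => p.2.finite_toSet).subset ?_
  rintro a ⟨R, as, hmem, ha⟩
  exact Set.mem_biUnion hmem ha

theorem Set.Finite.exists_iterate_eqOn_id {α : Type} {s : Set α} {f : α → α} (hs : s.Finite)
    (hmaps : Set.MapsTo f s s) (hinj : Set.InjOn f s) : ∃ n, 0 < n ∧ Set.EqOn f^[n] id s := by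
  have := hs.to_subtype
  let π : Equiv.Perm s := Equiv.ofBijective _ (hmaps.restrict_inj.mpr hinj).bijective_of_finite
  refine ⟨orderOf π, orderOf_pos π, fun x hx => ?_⟩
  have hπ : ((π ^ orderOf π) ⟨x, hx⟩ : α) = x := by rw [pow_orderOf_eq_one]; rfl
  rwa [Equiv.Perm.coe_pow, Equiv.coe_ofBijective, hmaps.iterate_restrict,
    Set.MapsTo.val_restrict_apply] at hπ

theorem Satisfies.of_retraction {σ α : Type} {D C : Inst σ α} {t : TGD σ} {r : α → α}
    (hsub : C ⊆ D) (hr : IsHom D C r) (hfix : Set.EqOn r id (activeDom C))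
    (hD : Satisfies D t) : Satisfies C t := by
  intro h hh
  obtain ⟨g, hgh, hg⟩ := hD h (hh.mono_right hsub)
  refine ⟨r ∘ g, fun x hx => ?_, hg.comp hr⟩
  have hxC : h x ∈ activeDom C := hh.mapsTo_activeDom hx.1
  simp only [Function.comp_apply, hgh x hx, hfix hxC, id]

theorem exists_retraction_of_core {σ α : Type} {D C : Inst σ α} (hDfin : D.Finite)
    (hsub : C ⊆ D) (hret : ∃ r : α → α, IsHom D C r)
    (hcore : ∀ f : α → α, IsHom C C f → Set.InjOn f (activeDom C)) :
    ∃ r : α → α, IsHom D C r ∧ Set.EqOn r id (activeDom C) := by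
  obtain ⟨r, hr⟩ := hret
  have hrC : IsHom C C r := hr.mono_left hsub
  obtain ⟨n, hn, hfix⟩ := (hDfin.subset hsub).activeDom.exists_iterate_eqOn_id
    hrC.mapsTo_activeDom (hcore r hrC)
  obtain ⟨m, rfl⟩ := Nat.exists_eq_succ_of_ne_zero hn.ne'
  refine ⟨r^[m + 1], ?_, hfix⟩
  rw [Function.iterate_succ]
  exact hr.comp (hrC.iterate m)

/-- If a finite database `D` satisfies a TGD `t`, then so does its core `C`.
Here `C` is a core of `D`: a sub-instance homomorphically equivalent to `D`
all of whose endomorphisms are injective on the active domain. -/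
theorem stmt0 {σ α : Type} (D C : Inst σ α) (t : TGD σ)
    (hDfin : D.Finite)
    (hsub : C ⊆ D)
    (hret : ∃ r : α → α, IsHom D C r)
    (hcore : ∀ f : α → α, IsHom C C f → Set.InjOn f (activeDom C))
    (hD : Satisfies D t) : Satisfies C t := by
  obtain ⟨r, hr, hfix⟩ := exists_retraction_of_core hDfin hsub hret hcore
  exact hD.of_retraction hsub hr hfix
end

section
/- Satisfaction of TGDs is preserved under cloning of domain elements: if D satisfies a TGD T, and D' is obtained from D by duplicating a domain element a into two elements a₁, a₂ (each fact mentioning a is replaced by all facts obtained by replacing occurrences of a independently by a₁ or a₂), then D' satisfies T. -/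
/-- The projection collapsing the two clones `Sum.inr true`, `Sum.inr false`
of the element `a` back to `a`. -/
def unclone {α : Type} (a : α) : α ⊕ Bool → α
  | Sum.inl b => b
  | Sum.inr _ => a

/-- The instance obtained from `D` by duplicating the element `a` into two
clones: the new domain is `(α \ {a}) ⊕ {a₁, a₂}`, and a fact is present iff
collapsing the clones back to `a` yields a fact of `D`. -/
def cloneInst {σ α : Type} (D : Inst σ α) (a : α) : Inst σ (α ⊕ Bool) :=
  {f | (f.1, f.2.map (unclone a)) ∈ D ∧ Sum.inl a ∉ f.2}

/-! A valuation of atoms in the cloned instance is a homomorphism exactly when it avoids the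
deleted element `a` and its collapse is a homomorphism into `D`. So a body match in the clone
collapses to a body match in `D`; the head witness that `D` provides is lifted back along the
section sending `a` to one of its clones, keeping the original values on the frontier, where the
collapse of the body match already agrees with it. -/

section Cloning

variable {σ α : Type}

theorem isHom_cloneInst_iff {β : Type} {S : Inst σ β} {D : Inst σ α} {a : α}
    {f : β → α ⊕ Bool} :
    IsHom S (cloneInst D a) f ↔
      IsHom S D (unclone a ∘ f) ∧ ∀ b ∈ activeDom S, f b ≠ Sum.inl a := by
  constructor
  · intro hf
    refine ⟨fun R as hR => by simpa [List.map_map] using (hf R as hR).1, ?_⟩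
    rintro b ⟨R, as, hR, hb⟩ hfb
    exact (hf R as hR).2 (hfb ▸ List.mem_map_of_mem hb)
  · rintro ⟨hD, hne⟩ R as hR
    refine ⟨by simpa [List.map_map] using hD R as hR, ?_⟩
    simp only [List.mem_map, not_exists, not_and]
    exact fun b hb => hne b ⟨R, as, hR, hb⟩

theorem exists_unclone_lift {ι : Type} {a : α} (s : Set ι) (h : ι → α ⊕ Bool) (g' : ι → α)
    (hs : ∀ x ∈ s, unclone a (h x) = g' x ∧ h x ≠ Sum.inl a) :
    ∃ g : ι → α ⊕ Bool, Set.EqOn g h s ∧ unclone a ∘ g = g' ∧ ∀ x, g x ≠ Sum.inl a := by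
  classical
  let lift : α → α ⊕ Bool := fun b => if b = a then Sum.inr true else Sum.inl b
  refine ⟨s.piecewise h (lift ∘ g'), Set.piecewise_eqOn _ _ _, funext fun x => ?_, fun x => ?_⟩
  all_goals
    by_cases hx : x ∈ s
    · simp [hx, hs x hx]
    · by_cases hax : g' x = a <;> simp [hx, hax, lift, unclone]

end Cloning

/-- Satisfaction of TGDs is preserved under cloning a domain element. -/
theorem stmt5 {σ α : Type} (D : Inst σ α) (a : α) (t : TGD σ)
    (hD : Satisfies D t) : Satisfies (cloneInst D a) t := by
  intro h hh
  obtain ⟨hh_collapse, hh_ne⟩ := isHom_cloneInst_iff.mp hh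
  obtain ⟨g', hg'_frontier, hg'⟩ := hD _ hh_collapse
  obtain ⟨g, hg_frontier, hg_collapse, hg_ne⟩ := exists_unclone_lift t.frontier h g'
    fun x hx => ⟨(hg'_frontier x hx).symm, hh_ne x hx.1⟩
  exact ⟨g, hg_frontier, isHom_cloneInst_iff.mpr ⟨hg_collapse ▸ hg', fun x _ => hg_ne x⟩⟩
end
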